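/- arXiv:1401.0487 — 7 statements merged into one kernel-verified Lean document; each statement's English description precedes it below -/
import Mathlib

section
/- Let T = (T₁,…,T_m) be a commuting m-tuple of bounded operators on a Hilbert space H. Suppose there exist μ > 0 and a positive integer k such that ‖Q_T^k(I)h‖ ≥ μ^{2k}‖h‖ for all h ∈ H. Then for every λ ∈ ℂ^m with ‖λ‖₂ < μ and every unit vector h ∈ H, Σ_{|α|=k} (k!/α!)·‖T^α h − λ^α h‖² ≥ (μ^k − ‖λ‖₂^k)² > 0. -/
/-! Put `Q = ∑_{|α|=k} (k!/α!) (T^α)* T^α`, a positive operator with `‖Q x‖ ≥ μ^{2k} ‖x‖`.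
Then `Q² ≥ μ^{4k}` in the Loewner order, and operator monotonicity of the square root gives
`Q ≥ μ^{2k}`, i.e. `∑ (k!/α!) ‖T^α h‖² ≥ μ^{2k}` for a unit vector `h`. By the multinomial theorem
`∑ (k!/α!) ‖λ^α h‖² = ‖λ‖₂^{2k}`, and the reverse triangle inequality in the weighted `ℓ²`-sum
indexed by `|α| = k` bounds the distance of `(T^α h)_α` and `(λ^α h)_α` below by `μ^k - ‖λ‖₂^k`. -/

open scoped InnerProductSpace NNReal
open RCLike

theorem Pi.induction_add_single_one {m : ℕ} {C : (Fin m → ℕ) → Prop} (zero : C 0)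
    (add_single : ∀ α j, C α → C (α + Pi.single j 1)) (α : Fin m → ℕ) : C α := by
  induction hn : ∑ i, α i generalizing α with
  | zero =>
    obtain rfl : α = 0 := funext fun i => Finset.sum_eq_zero_iff.mp hn i (Finset.mem_univ i)
    exact zero
  | succ n ih =>
    obtain ⟨j, hj⟩ : ∃ j, α j ≠ 0 := by
      by_contra! h0
      simp [h0] at hn
    have hα : α - Pi.single j 1 + Pi.single j 1 = α := by
      ext i
      rcases eq_or_ne i j with rfl | hij
      · simp only [Pi.add_apply, Pi.sub_apply, Pi.single_eq_same]; omega
      · simp [hij]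
    rw [← hα]
    refine add_single _ j (ih _ ?_)
    rw [← hα] at hn
    simp only [Pi.add_apply, Finset.sum_add_distrib] at hn
    simpa using hn

section MonomialOperators

variable {H : Type*} [NormedAddCommGroup H] [InnerProductSpace ℂ H] {m : ℕ}
  {T : Fin m → H →L[ℂ] H} {P Pstar : (Fin m → ℕ) → H →L[ℂ] H}

theorem commute_monomial_of_step (hcomm : ∀ i j, Commute (T i) (T j)) (hP0 : P 0 = 1)
    (hPstep : ∀ α j, P (α + Pi.single j 1) = T j * P α) (α : Fin m → ℕ) (j : Fin m) :
    Commute (T j) (P α) := by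
  induction α using Pi.induction_add_single_one with
  | zero => exact hP0 ▸ Commute.one_right _
  | add_single α i ih => exact hPstep α i ▸ (hcomm j i).mul_right ih

theorem eq_star_monomial_of_step [CompleteSpace H] (hcomm : ∀ i j, Commute (T i) (T j))
    (hP0 : P 0 = 1) (hPstar0 : Pstar 0 = 1) (hPstep : ∀ α j, P (α + Pi.single j 1) = T j * P α)
    (hPstarstep : ∀ α j, Pstar (α + Pi.single j 1) = star (T j) * Pstar α)
    (α : Fin m → ℕ) : Pstar α = star (P α) := by
  induction α using Pi.induction_add_single_one with
  | zero => rw [hPstar0, hP0, star_one]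
  | add_single α j ih =>
    rw [hPstarstep, hPstep, ih, star_mul]
    exact (commute_monomial_of_step hcomm hP0 hPstep α j).star_star.eq

end MonomialOperators

theorem sq_sqrt_sum_sub_sqrt_sum_le {ι E : Type*} [SeminormedAddCommGroup E] (s : Finset ι)
    {w : ι → ℝ} (hw : ∀ i ∈ s, 0 ≤ w i) (x y : ι → E) :
    (√(∑ i ∈ s, w i * ‖x i‖ ^ 2) - √(∑ i ∈ s, w i * ‖y i‖ ^ 2)) ^ 2 ≤
      ∑ i ∈ s, w i * ‖x i - y i‖ ^ 2 := by
  let v (z : ι → E) : EuclideanSpace ℝ s := WithLp.toLp 2 fun i => √(w i) * ‖z i‖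
  have hv : ∀ z, √(∑ i ∈ s, w i * ‖z i‖ ^ 2) = ‖v z‖ := by
    intro z
    rw [EuclideanSpace.norm_eq, ← Finset.sum_coe_sort s]
    congr 1
    refine Finset.sum_congr rfl fun i _ => ?_
    simp [v, mul_pow, Real.sq_sqrt (hw i i.2)]
  calc (√(∑ i ∈ s, w i * ‖x i‖ ^ 2) - √(∑ i ∈ s, w i * ‖y i‖ ^ 2)) ^ 2
      = (‖v x‖ - ‖v y‖) ^ 2 := by rw [hv, hv]
    _ ≤ ‖v x - v y‖ ^ 2 := sq_le_sq.mpr ((abs_norm_sub_norm_le _ _).trans (le_abs_self _))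
    _ = ∑ i ∈ s, w i * (‖x i‖ - ‖y i‖) ^ 2 := by
      rw [EuclideanSpace.norm_eq, Real.sq_sqrt (by positivity), ← Finset.sum_coe_sort s]
      refine Finset.sum_congr rfl fun i _ => ?_
      simp [v, ← mul_sub, mul_pow, Real.sq_sqrt (hw i i.2)]
    _ ≤ ∑ i ∈ s, w i * ‖x i - y i‖ ^ 2 := by
      refine Finset.sum_le_sum fun i hi => mul_le_mul_of_nonneg_left ?_ (hw i hi)
      exact sq_le_sq.mpr ((abs_norm_sub_norm_le _ _).trans (abs_norm _).ge)

theorem sum_multinomial_mul_norm_prod_pow_sq {m : ℕ} (lam : Fin m → ℂ) (k : ℕ) :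
    ∑ α ∈ Finset.Nat.antidiagonalTuple m k,
        (Nat.multinomial Finset.univ α : ℝ) * ‖∏ i, lam i ^ α i‖ ^ 2 =
      (∑ i, ‖lam i‖ ^ 2) ^ k := by
  rw [Finset.sum_pow_eq_sum_piAntidiag, Finset.piAntidiag_univ_fin_eq_antidiagonalTuple]
  refine Finset.sum_congr rfl fun α _ => ?_
  simp only [norm_prod, norm_pow, ← Finset.prod_pow, ← pow_mul, mul_comm]

theorem sum_smul_star_mul_self_nonneg {R ι : Type*} [Semiring R] [PartialOrder R] [StarRing R]
    [StarOrderedRing R] [Algebra ℂ R] (s : Finset ι) (w : ι → ℕ) (A : ι → R) :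
    0 ≤ ∑ i ∈ s, (w i : ℂ) • (star (A i) * A i) :=
  Finset.sum_nonneg fun i _ => by
    rw [Nat.cast_smul_eq_nsmul]
    exact nsmul_nonneg (star_mul_self_nonneg _) _

theorem re_inner_sum_smul_star_mul_self {H ι : Type*} [NormedAddCommGroup H]
    [InnerProductSpace ℂ H] [CompleteSpace H] (s : Finset ι) (w : ι → ℕ)
    (A : ι → H →L[ℂ] H) (x : H) :
    re ⟪(∑ i ∈ s, (w i : ℂ) • (star (A i) * A i)) x, x⟫_ℂ =
      ∑ i ∈ s, w i * ‖A i x‖ ^ 2 := by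
  simp [ContinuousLinearMap.star_eq_adjoint, ContinuousLinearMap.adjoint_inner_left,
    inner_self_eq_norm_sq_to_K, ← Complex.ofReal_pow, mul_comm]

namespace ContinuousLinearMap

variable {H : Type*} [NormedAddCommGroup H] [InnerProductSpace ℂ H] [CompleteSpace H]

theorem algebraMap_le_iff_forall_le_re_inner {T : H →L[ℂ] H} (hT : IsSelfAdjoint T) (r : ℝ) :
    algebraMap ℝ (H →L[ℂ] H) r ≤ T ↔ ∀ x, r * ‖x‖ ^ 2 ≤ re ⟪T x, x⟫_ℂ := by
  have hsa : IsSelfAdjoint (T - algebraMap ℝ (H →L[ℂ] H) r) :=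
    hT.sub (.algebraMap _ (.all r))
  have hre : ∀ x, reApplyInnerSelf (T - algebraMap ℝ (H →L[ℂ] H) r) x
      = re ⟪T x, x⟫_ℂ - r * ‖x‖ ^ 2 := by
    intro x
    rw [reApplyInnerSelf_apply, sub_apply, inner_sub_left, map_sub, Algebra.algebraMap_eq_smul_one,
      ← algebraMap_smul ℂ r (1 : H →L[ℂ] H), smul_apply, one_apply_eq_self, inner_smul_left,
      RCLike.algebraMap_eq_ofReal, conj_ofReal, re_ofReal_mul, inner_self_eq_norm_sq]
  simp only [le_def, isPositive_def', hsa, true_and, hre, sub_nonneg]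

theorem sq_algebraMap_le_sq_of_le_norm_apply {Q : H →L[ℂ] H} (hQ : IsSelfAdjoint Q) {c : ℝ}
    (hc : 0 ≤ c) (h : ∀ x, c * ‖x‖ ≤ ‖Q x‖) : algebraMap ℝ (H →L[ℂ] H) (c ^ 2) ≤ Q ^ 2 := by
  rw [algebraMap_le_iff_forall_le_re_inner (hQ.pow 2)]
  intro x
  have : re ⟪(Q ^ 2) x, x⟫_ℂ = ‖Q x‖ ^ 2 := by
    rw [sq, mul_apply_eq_comp, ← adjoint_inner_right, hQ.adjoint_eq, inner_self_eq_norm_sq]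
  rw [this, ← mul_pow]
  exact pow_le_pow_left₀ (by positivity) (h x) 2

theorem algebraMap_le_of_le_norm_apply {Q : H →L[ℂ] H} (hQ : 0 ≤ Q) {c : ℝ} (hc : 0 ≤ c)
    (h : ∀ x, c * ‖x‖ ≤ ‖Q x‖) : algebraMap ℝ (H →L[ℂ] H) c ≤ Q := by
  have := CFC.sqrt_le_sqrt _ _ (sq_algebraMap_le_sq_of_le_norm_apply hQ.isSelfAdjoint hc h)
  lift c to ℝ≥0 using hc
  have e : ∀ r : ℝ≥0, algebraMap ℝ (H →L[ℂ] H) r = algebraMap ℝ≥0 (H →L[ℂ] H) r := fun r =>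
    (IsScalarTower.algebraMap_apply ℝ≥0 ℝ (H →L[ℂ] H) r).symm
  rw [e]
  rwa [CFC.sqrt_sq Q, ← NNReal.coe_pow, e, CFC.sqrt_algebraMap, NNReal.sqrt_sq] at this

theorem le_re_inner_of_le_norm_apply {Q : H →L[ℂ] H} (hQ : 0 ≤ Q) {c : ℝ} (hc : 0 ≤ c)
    (h : ∀ x, c * ‖x‖ ≤ ‖Q x‖) (x : H) : c * ‖x‖ ^ 2 ≤ re ⟪Q x, x⟫_ℂ :=
  (algebraMap_le_iff_forall_le_re_inner hQ.isSelfAdjoint c).1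
    (algebraMap_le_of_le_norm_apply hQ hc h) x

end ContinuousLinearMap

theorem stmt4_general {H : Type*} [NormedAddCommGroup H] [InnerProductSpace ℂ H] [CompleteSpace H]
    {m : ℕ} (T : Fin m → (H →L[ℂ] H))
    (hcomm : ∀ i j, Commute (T i) (T j))
    (P Pstar : (Fin m → ℕ) → (H →L[ℂ] H))
    (hP0 : P 0 = 1) (hPstar0 : Pstar 0 = 1)
    (hPstep : ∀ (α : Fin m → ℕ) (j : Fin m), P (α + Pi.single j 1) = T j * P α)
    (hPstarstep : ∀ (α : Fin m → ℕ) (j : Fin m),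
      Pstar (α + Pi.single j 1) = ContinuousLinearMap.adjoint (T j) * Pstar α)
    (μ : ℝ) (k : ℕ) (hk : 0 < k)
    (hlow : ∀ h : H,
      μ ^ (2 * k) * ‖h‖ ≤
        ‖(∑ α ∈ Finset.Nat.antidiagonalTuple m k,
            (Nat.multinomial Finset.univ α : ℂ) • (Pstar α * P α)) h‖)
    (lam : Fin m → ℂ)
    (hlam : Real.sqrt (∑ i, ‖lam i‖ ^ 2) < μ)
    (h : H) (hh : ‖h‖ = 1) :
    (μ ^ k - Real.sqrt (∑ i, ‖lam i‖ ^ 2) ^ k) ^ 2 ≤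
      ∑ α ∈ Finset.Nat.antidiagonalTuple m k,
        (Nat.multinomial Finset.univ α : ℝ) * ‖P α h - (∏ i, lam i ^ α i) • h‖ ^ 2 ∧
    0 < (μ ^ k - Real.sqrt (∑ i, ‖lam i‖ ^ 2) ^ k) ^ 2 := by
  set A := Finset.Nat.antidiagonalTuple m k
  set L := √(∑ i, ‖lam i‖ ^ 2)
  have hPstar : ∀ α, Pstar α = star (P α) := eq_star_monomial_of_step hcomm hP0 hPstar0 hPstep
    (by simpa only [← ContinuousLinearMap.star_eq_adjoint] using hPstarstep)
  simp_rw [hPstar] at hlow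
  have hQ := sum_smul_star_mul_self_nonneg A (Nat.multinomial Finset.univ) P
  have hPh : μ ^ (2 * k) ≤ ∑ α ∈ A, (Nat.multinomial Finset.univ α : ℝ) * ‖P α h‖ ^ 2 := by
    have := ContinuousLinearMap.le_re_inner_of_le_norm_apply hQ (by rw [pow_mul]; positivity) hlow h
    rwa [re_inner_sum_smul_star_mul_self, hh, one_pow, mul_one] at this
  have hlamh : ∑ α ∈ A, (Nat.multinomial Finset.univ α : ℝ) * ‖(∏ i, lam i ^ α i) • h‖ ^ 2 =
      (L ^ k) ^ 2 := by
    simp_rw [norm_smul, hh, mul_one, A, sum_multinomial_mul_norm_prod_pow_sq, L, ← pow_mul,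
      mul_comm k 2, pow_mul, Real.sq_sqrt (by positivity : (0 : ℝ) ≤ ∑ i, ‖lam i‖ ^ 2)]
  have hLk : L ^ k < μ ^ k := pow_lt_pow_left₀ hlam (Real.sqrt_nonneg _) hk.ne'
  have hμk : μ ^ k ≤ √(∑ α ∈ A, (Nat.multinomial Finset.univ α : ℝ) * ‖P α h‖ ^ 2) :=
    Real.le_sqrt_of_sq_le (by rwa [← pow_mul, mul_comm])
  refine ⟨?_, pow_pos (sub_pos.2 hLk) 2⟩
  calc (μ ^ k - L ^ k) ^ 2
      ≤ (√(∑ α ∈ A, (Nat.multinomial Finset.univ α : ℝ) * ‖P α h‖ ^ 2) -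
          √(∑ α ∈ A, (Nat.multinomial Finset.univ α : ℝ) * ‖(∏ i, lam i ^ α i) • h‖ ^ 2)) ^ 2 := by
        rw [hlamh, Real.sqrt_sq (by positivity)]
        gcongr
    _ ≤ _ := sq_sqrt_sum_sub_sqrt_sum_le A (fun _ _ => Nat.cast_nonneg _) _ _

theorem stmt4 {H : Type*} [NormedAddCommGroup H] [InnerProductSpace ℂ H] [CompleteSpace H]
    {m : ℕ} (T : Fin m → (H →L[ℂ] H))
    (hcomm : ∀ i j, Commute (T i) (T j))
    (P Pstar : (Fin m → ℕ) → (H →L[ℂ] H))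
    (hP0 : P 0 = 1) (hPstar0 : Pstar 0 = 1)
    (hPstep : ∀ (α : Fin m → ℕ) (j : Fin m), P (α + Pi.single j 1) = T j * P α)
    (hPstarstep : ∀ (α : Fin m → ℕ) (j : Fin m),
      Pstar (α + Pi.single j 1) = ContinuousLinearMap.adjoint (T j) * Pstar α)
    (μ : ℝ) (hμ : 0 < μ) (k : ℕ) (hk : 0 < k)
    (hlow : ∀ h : H,
      μ ^ (2 * k) * ‖h‖ ≤
        ‖(∑ α ∈ Finset.Nat.antidiagonalTuple m k,
            (Nat.multinomial Finset.univ α : ℂ) • (Pstar α * P α)) h‖)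
    (lam : Fin m → ℂ)
    (hlam : Real.sqrt (∑ i, ‖lam i‖ ^ 2) < μ)
    (h : H) (hh : ‖h‖ = 1) :
    (μ ^ k - Real.sqrt (∑ i, ‖lam i‖ ^ 2) ^ k) ^ 2 ≤
      ∑ α ∈ Finset.Nat.antidiagonalTuple m k,
        (Nat.multinomial Finset.univ α : ℝ) * ‖P α h - (∏ i, lam i ^ α i) • h‖ ^ 2 ∧
    0 < (μ ^ k - Real.sqrt (∑ i, ‖lam i‖ ^ 2) ^ k) ^ 2 :=
  stmt4_general T hcomm P Pstar hP0 hPstar0 hPstep hPstarstep μ k hk hlow lam hlam h hh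
end

section
/- Let m ≥ 2 and 1 ≤ p < ∞ be fixed, and let j ≠ l with 1 ≤ j, l ≤ m. Then there exist positive constants A, B and k₀ such that for all k ≥ k₀, A·k^{p+m−1} ≤ Σ_{n ∈ ℕ^m, |n| = k, n_j > 0} n_j^{p/2}·n_l^{p/2} ≤ B·k^{p+m−1}. -/
/-!
The sum has at most `(k + 1) ^ (m - 1)` terms, since a composition of `k` is determined by its
coordinates off `l`, and each term is at most `k ^ p`. Conversely, for `q = ⌊k / 2m⌋` every choice
of the coordinates off `l` in `[q, 2q)` completes, through the `l`-th coordinate, to a composition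
of `k` with `n l ≥ q`; these `q ^ (m - 1)` compositions contribute at least `q ^ p` each.
-/

open Finset Finset.Nat Function

lemma Real.rpow_half_mul_rpow_half {x p : ℝ} (hx : 0 ≤ x) (hp : 0 ≤ p) :
    x ^ (p / 2) * x ^ (p / 2) = x ^ p := by
  rw [← Real.rpow_add_of_nonneg hx (by positivity) (by positivity), add_halves]

lemma Real.pow_sub_one_mul_rpow {x p : ℝ} {m : ℕ} (hx : 0 < x) (hm : 0 < m) :
    x ^ (m - 1) * x ^ p = x ^ (p + m - 1) := by
  rw [← Real.rpow_natCast, ← Real.rpow_add hx, Nat.cast_sub hm, Nat.cast_one]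
  ring_nf

lemma Nat.cast_div_two_mul_le_cast_div {k n : ℕ} (hn : 0 < n) (hnk : n ≤ k) :
    (k : ℝ) / (2 * n) ≤ (k / n : ℕ) := by
  have hlt := Nat.lt_div_mul_add (a := k) hn
  have hpos := Nat.div_pos hnk hn
  rw [div_le_iff₀ (by positivity)]
  exact_mod_cast (by nlinarith : k ≤ k / n * (2 * n))

noncomputable def productPowerSum (m : ℕ) (p : ℝ) (j l : Fin m) (k : ℕ) : ℝ :=
  ∑ n ∈ (antidiagonalTuple m k).filter (fun n => 0 < n j), (n j : ℝ) ^ (p / 2) * (n l : ℝ) ^ (p / 2)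

lemma Fintype.sum_update_eq_add_sum_erase {ι M : Type*} [Fintype ι] [DecidableEq ι]
    [AddCommMonoid M] (g : ι → M) (l : ι) (c : M) :
    ∑ i, update g l c i = c + ∑ i ∈ univ.erase l, g i := by
  rw [sum_update_of_mem (mem_univ l), sdiff_singleton_eq_erase]

section Completion

variable {m : ℕ}

def boxExcept (l : Fin m) (s : Finset ℕ) : Finset (Fin m → ℕ) :=
  Fintype.piFinset fun i => if i = l then {0} else s

lemma mem_boxExcept {l : Fin m} {s : Finset ℕ} {g : Fin m → ℕ} :
    g ∈ boxExcept l s ↔ g l = 0 ∧ ∀ i ≠ l, g i ∈ s := by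
  simp only [boxExcept, Fintype.mem_piFinset]
  refine ⟨fun h => ⟨by simpa using h l, fun i hi => by simpa [hi] using h i⟩, ?_⟩
  rintro ⟨hl, hs⟩ i
  by_cases hi : i = l
  · simp [hi, hl]
  · simpa [hi] using hs i hi

lemma card_boxExcept (l : Fin m) (s : Finset ℕ) : #(boxExcept l s) = #s ^ (m - 1) := by
  simp [boxExcept, apply_ite, prod_ite, filter_ne']

def completeAt (l : Fin m) (k : ℕ) (g : Fin m → ℕ) : Fin m → ℕ :=
  update g l (k - ∑ i ∈ univ.erase l, g i)

lemma completeAt_mem_antidiagonalTuple {l : Fin m} {k : ℕ} {g : Fin m → ℕ}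
    (h : ∑ i ∈ univ.erase l, g i ≤ k) : completeAt l k g ∈ antidiagonalTuple m k := by
  rw [mem_antidiagonalTuple, completeAt, Fintype.sum_update_eq_add_sum_erase]
  omega

lemma leftInvOn_completeAt_update_zero (l : Fin m) (k : ℕ) :
    Set.LeftInvOn (completeAt l k) (update · l 0) (antidiagonalTuple m k) := by
  intro n hn
  have hsum := add_sum_erase univ n (mem_univ l)
  rw [mem_coe, mem_antidiagonalTuple] at hn
  ext i
  by_cases hi : i = l
  · subst hi
    simp only [completeAt, update_self, sum_update_of_notMem (notMem_erase i univ)]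
    omega
  · simp [completeAt, update_of_ne hi]

lemma injOn_completeAt (l : Fin m) (k : ℕ) (s : Finset ℕ) :
    Set.InjOn (completeAt l k) (boxExcept l s) := by
  intro g hg g' hg' h
  ext i
  by_cases hi : i = l
  · rw [hi, (mem_boxExcept.1 hg).1, (mem_boxExcept.1 hg').1]
  · simpa [completeAt, update_of_ne hi] using congrFun h i

end Completion

lemma apply_le_of_mem_antidiagonalTuple {m k : ℕ} {n : Fin m → ℕ} (hn : n ∈ antidiagonalTuple m k)
    (i : Fin m) : n i ≤ k :=
  mem_antidiagonalTuple.1 hn ▸ single_le_sum (fun _ _ => Nat.zero_le _) (mem_univ i)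

lemma card_antidiagonalTuple_le (m k : ℕ) : #(antidiagonalTuple m k) ≤ (k + 1) ^ (m - 1) := by
  cases m with
  | zero => simpa using card_le_one_of_subsingleton _
  | succ m =>
    calc #(antidiagonalTuple (m + 1) k) ≤ #(boxExcept 0 (range (k + 1))) :=
          card_le_card_of_injOn (update · 0 0)
            (fun n hn => mem_boxExcept.2 ⟨update_self .., fun i hi => by
              simpa [update_of_ne hi, Nat.lt_succ_iff] using apply_le_of_mem_antidiagonalTuple hn i⟩)
            (leftInvOn_completeAt_update_zero 0 k).injOn
      _ = (k + 1) ^ (m + 1 - 1) := by rw [card_boxExcept, card_range]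

section Bounds

variable {m : ℕ} {p : ℝ} {j l : Fin m}

lemma productPowerSum_le (hp : 0 ≤ p) (k : ℕ) :
    productPowerSum m p j l k ≤ (k + 1 : ℝ) ^ (m - 1) * (k : ℝ) ^ p := by
  have hterm : ∀ n ∈ (antidiagonalTuple m k).filter (fun n => 0 < n j),
      (n j : ℝ) ^ (p / 2) * (n l : ℝ) ^ (p / 2) ≤ (k : ℝ) ^ p := by
    intro n hn
    have hn := (mem_filter.1 hn).1
    rw [← Real.rpow_half_mul_rpow_half k.cast_nonneg hp]
    gcongr <;> exact_mod_cast apply_le_of_mem_antidiagonalTuple hn _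
  calc productPowerSum m p j l k
      ≤ #((antidiagonalTuple m k).filter (fun n => 0 < n j)) • (k : ℝ) ^ p :=
        sum_le_card_nsmul _ _ _ hterm
    _ ≤ (k + 1 : ℝ) ^ (m - 1) * (k : ℝ) ^ p := by
        rw [nsmul_eq_mul]
        gcongr
        exact_mod_cast (card_filter_le _ _).trans (card_antidiagonalTuple_le m k)

lemma pow_mul_rpow_le_productPowerSum (hp : 0 ≤ p) (hjl : j ≠ l) {q k : ℕ} (hq : 0 < q)
    (hqk : 2 * m * q ≤ k) : (q : ℝ) ^ (m - 1) * (q : ℝ) ^ p ≤ productPowerSum m p j l k := by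
  set T := boxExcept l (Ico q (2 * q))
  have hbudget : (m - 1) * (2 * q) + q ≤ k := by
    have : (m - 1) * (2 * q) + 2 * q = m * (2 * q) := by
      rw [← Nat.succ_mul, Nat.succ_eq_add_one, Nat.sub_add_cancel l.pos]
    linarith
  have hsum : ∀ g ∈ T, ∑ i ∈ univ.erase l, g i + q ≤ k := by
    intro g hg
    have : ∑ i ∈ univ.erase l, g i ≤ (m - 1) * (2 * q) := by
      simpa [card_erase_of_mem] using sum_le_card_nsmul (univ.erase l) g (2 * q) fun i hi =>
        (mem_Ico.1 ((mem_boxExcept.1 hg).2 i (ne_of_mem_erase hi))).2.le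
    omega
  have hj : ∀ g ∈ T, q ≤ completeAt l k g j := fun g hg => by
    rw [completeAt, update_of_ne hjl]
    exact (mem_Ico.1 ((mem_boxExcept.1 hg).2 j hjl)).1
  have hl : ∀ g ∈ T, q ≤ completeAt l k g l := fun g hg => by
    rw [completeAt, update_self]
    have := hsum g hg
    omega
  have hmem : ∀ g ∈ T, completeAt l k g ∈ (antidiagonalTuple m k).filter (fun n => 0 < n j) :=
    fun g hg => mem_filter.2
      ⟨completeAt_mem_antidiagonalTuple (by have := hsum g hg; omega), hq.trans_le (hj g hg)⟩
  calc (q : ℝ) ^ (m - 1) * (q : ℝ) ^ p = #T • (q : ℝ) ^ p := by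
        rw [card_boxExcept, Nat.card_Ico, nsmul_eq_mul, two_mul, Nat.add_sub_cancel, Nat.cast_pow]
    _ ≤ ∑ g ∈ T, (completeAt l k g j : ℝ) ^ (p / 2) * (completeAt l k g l : ℝ) ^ (p / 2) := by
        refine card_nsmul_le_sum _ _ _ fun g hg => ?_
        rw [← Real.rpow_half_mul_rpow_half q.cast_nonneg hp]
        gcongr
        exacts [hj g hg, hl g hg]
    _ = ∑ n ∈ T.image (completeAt l k), (n j : ℝ) ^ (p / 2) * (n l : ℝ) ^ (p / 2) := by
        rw [sum_image (injOn_completeAt l k _)]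
    _ ≤ productPowerSum m p j l k :=
        sum_le_sum_of_subset_of_nonneg (image_subset_iff.2 hmem) fun _ _ _ => by positivity

end Bounds

theorem stmt6_general (m : ℕ) (p : ℝ) (hp1 : 1 ≤ p)
    (j l : Fin m) (hjl : j ≠ l) :
    ∃ A B : ℝ, 0 < A ∧ 0 < B ∧ ∃ k₀ : ℕ, ∀ k : ℕ, k₀ ≤ k →
      A * (k : ℝ) ^ (p + m - 1) ≤
        (∑ n ∈ (Finset.Nat.antidiagonalTuple m k).filter (fun n => 0 < n j),
          ((n j : ℝ) ^ (p / 2)) * ((n l : ℝ) ^ (p / 2))) ∧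
      (∑ n ∈ (Finset.Nat.antidiagonalTuple m k).filter (fun n => 0 < n j),
          ((n j : ℝ) ^ (p / 2)) * ((n l : ℝ) ^ (p / 2))) ≤
        B * (k : ℝ) ^ (p + m - 1) := by
  have hp : 0 ≤ p := by linarith
  have hm : 0 < m := j.pos
  refine ⟨(4 * m : ℝ)⁻¹ ^ (p + m - 1), 2 ^ (m - 1), by positivity, by positivity, 2 * m,
    fun k hk => ⟨?_, ?_⟩⟩
  · have hk0 : (0 : ℝ) < k := by exact_mod_cast (by omega : 0 < k)
    have hq : (k : ℝ) / (4 * m) ≤ (k / (2 * m) : ℕ) := by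
      convert Nat.cast_div_two_mul_le_cast_div (by omega : 0 < 2 * m) hk using 2
      push_cast
      ring
    calc (4 * m : ℝ)⁻¹ ^ (p + m - 1) * (k : ℝ) ^ (p + m - 1)
        = ((k : ℝ) / (4 * m)) ^ (m - 1) * ((k : ℝ) / (4 * m)) ^ p := by
          rw [Real.pow_sub_one_mul_rpow (by positivity) hm, ← Real.mul_rpow (by positivity)
            hk0.le, inv_mul_eq_div]
      _ ≤ ((k / (2 * m) : ℕ) : ℝ) ^ (m - 1) * ((k / (2 * m) : ℕ) : ℝ) ^ p := by gcongr
      _ ≤ productPowerSum m p j l k :=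
          pow_mul_rpow_le_productPowerSum hp hjl (Nat.div_pos hk (by omega))
            (by rw [mul_comm]; exact Nat.div_mul_le_self k (2 * m))
  · have hk1 : (1 : ℝ) ≤ k := by exact_mod_cast (by omega : 1 ≤ k)
    calc productPowerSum m p j l k ≤ (k + 1 : ℝ) ^ (m - 1) * (k : ℝ) ^ p := productPowerSum_le hp k
      _ ≤ (2 * k : ℝ) ^ (m - 1) * (k : ℝ) ^ p := by gcongr; linarith
      _ = 2 ^ (m - 1) * (k : ℝ) ^ (p + m - 1) := by
          rw [mul_pow, mul_assoc, Real.pow_sub_one_mul_rpow (by positivity) hm]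

theorem stmt6 (m : ℕ) (hm : 2 ≤ m) (p : ℝ) (hp1 : 1 ≤ p)
    (j l : Fin m) (hjl : j ≠ l) :
    ∃ A B : ℝ, 0 < A ∧ 0 < B ∧ ∃ k₀ : ℕ, ∀ k : ℕ, k₀ ≤ k →
      A * (k : ℝ) ^ (p + m - 1) ≤
        (∑ n ∈ (Finset.Nat.antidiagonalTuple m k).filter (fun n => 0 < n j),
          ((n j : ℝ) ^ (p / 2)) * ((n l : ℝ) ^ (p / 2))) ∧
      (∑ n ∈ (Finset.Nat.antidiagonalTuple m k).filter (fun n => 0 < n j),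
          ((n j : ℝ) ^ (p / 2)) * ((n l : ℝ) ^ (p / 2))) ≤
        B * (k : ℝ) ^ (p + m - 1) :=
  stmt6_general m p hp1 j l hjl
end

section
/- Let (ρ_k)_{k≥0} be a sequence of nonnegative reals and m ≥ 2 an integer. Suppose Σ_k ρ_k^m / k < ∞ and Σ_k |ρ_{k+1} − ρ_k|^m · k^{m−1} < ∞ (sums over k ≥ 1). Then ρ_k → 0 as k → ∞. -/
theorem stmt9 (ρ : ℕ → ℝ) (hρ : ∀ k, 0 ≤ ρ k) (m : ℕ) (hm : 2 ≤ m)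
    (h1 : Summable (fun k : ℕ => ρ (k + 1) ^ m / (k + 1 : ℝ)))
    (h2 : Summable (fun k : ℕ => |ρ (k + 2) - ρ (k + 1)| ^ m * ((k + 1 : ℕ) : ℝ) ^ (m - 1))) :
    Filter.Tendsto ρ Filter.atTop (nhds 0) := by
  set σ : ℕ → ℝ := fun n => ρ (n + 1) with hσdef
  set a : ℕ → ℝ := fun k => ρ (k + 1) ^ m / (k + 1 : ℝ) with hadef
  set b : ℕ → ℝ := fun k => |ρ (k + 2) - ρ (k + 1)| ^ m * ((k + 1 : ℕ) : ℝ) ^ (m - 1)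
    with hbdef
  have hσnn : ∀ n, 0 ≤ σ n := fun n => hρ _
  have hann : ∀ k, 0 ≤ a k := fun k => by
    apply div_nonneg (pow_nonneg (hρ _) _); positivity
  have hbnn : ∀ k, 0 ≤ b k := fun k => by
    apply mul_nonneg (pow_nonneg (abs_nonneg _) _); positivity
  -- reduce to σ
  rw [← Filter.tendsto_add_atTop_iff_nat 1]
  rw [Metric.tendsto_atTop]
  intro ε hε
  set ε' : ℝ := ε / 2 with hε'def
  have hε' : 0 < ε' := by positivity
  have hε'm : 0 < ε' ^ m := pow_pos hε' m
  -- vanishing for b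
  obtain ⟨s2, hs2⟩ := h2.vanishing (Metric.ball_mem_nhds (0 : ℝ) hε'm)
  obtain ⟨s1, hs1⟩ := h1.vanishing (Metric.ball_mem_nhds (0 : ℝ) (by positivity : (0:ℝ) < ε' ^ m / 2))
  set N : ℕ := max ((s1 ∪ s2).sup id + 1) 1 with hN
  refine ⟨N, fun n hn => ?_⟩
  have hn1 : 1 ≤ n := le_trans (le_max_right _ _) hn
  have hdisj : ∀ t : Finset ℕ, (∀ i ∈ t, n ≤ i) → Disjoint t (s1 ∪ s2) := by
    intro t ht
    rw [Finset.disjoint_left]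
    intro i hi hi'
    have h1' : i ≤ (s1 ∪ s2).sup id := Finset.le_sup (f := id) hi'
    have h2' : (s1 ∪ s2).sup id + 1 ≤ n := le_trans (le_max_left _ _) hn
    have := le_trans (ht i hi) h1'
    omega
  -- main claim : σ n < ε
  have hmain : σ n < ε := by
    by_contra hcon
    push_neg at hcon
    -- step 1 : for j in Icc n (2n), ε' < σ j
    have step1 : ∀ j ∈ Finset.Icc n (2 * n), ε' < σ j := by
      intro j hj
      rw [Finset.mem_Icc] at hj
      obtain ⟨hj1, hj2⟩ := hj
      -- telescoping
      have htel : σ j - σ n = ∑ i ∈ Finset.Ico n j, (σ (i + 1) - σ i) := by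
        rw [Finset.sum_Ico_eq_sub _ hj1, Finset.sum_range_sub σ, Finset.sum_range_sub σ]
        ring
      have habs : |σ j - σ n| ≤ ∑ i ∈ Finset.Ico n j, |σ (i + 1) - σ i| := by
        rw [htel]; exact Finset.abs_sum_le_sum_abs _ _
      have hsumnn : 0 ≤ ∑ i ∈ Finset.Ico n j, |σ (i + 1) - σ i| :=
        Finset.sum_nonneg fun i _ => abs_nonneg _
      -- Jensen
      have hcard : (Finset.Ico n j).card = j - n := Nat.card_Ico n j
      have hjensen : (∑ i ∈ Finset.Ico n j, |σ (i + 1) - σ i|) ^ m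
          ≤ ((j - n : ℕ) : ℝ) ^ (m - 1) * ∑ i ∈ Finset.Ico n j, |σ (i + 1) - σ i| ^ m := by
        have := pow_sum_le_card_mul_sum_pow (s := Finset.Ico n j)
          (f := fun i => |σ (i + 1) - σ i|) (fun i _ => abs_nonneg _) (m - 1)
        rw [Nat.sub_add_cancel (le_trans one_le_two hm)] at this
        rwa [hcard] at this
      have hterm : ((j - n : ℕ) : ℝ) ^ (m - 1) * ∑ i ∈ Finset.Ico n j, |σ (i + 1) - σ i| ^ m
          ≤ ∑ i ∈ Finset.Ico n j, b i := by
        rw [Finset.mul_sum]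
        apply Finset.sum_le_sum
        intro i hi
        rw [Finset.mem_Ico] at hi
        have hle : ((j - n : ℕ) : ℝ) ≤ ((i + 1 : ℕ) : ℝ) := by
          exact_mod_cast Nat.le_of_lt_succ (by omega)
        have : ((j - n : ℕ) : ℝ) ^ (m - 1) ≤ ((i + 1 : ℕ) : ℝ) ^ (m - 1) :=
          pow_le_pow_left₀ (by positivity) hle _
        show ((j - n : ℕ) : ℝ) ^ (m - 1) * |σ (i + 1) - σ i| ^ m
            ≤ |σ (i + 1) - σ i| ^ m * ((i + 1 : ℕ) : ℝ) ^ (m - 1)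
        rw [mul_comm]
        exact mul_le_mul_of_nonneg_left this (pow_nonneg (abs_nonneg _) _)
      have hbsum : ∑ i ∈ Finset.Ico n j, b i < ε' ^ m := by
        have hd := hs2 (Finset.Ico n j) (Finset.disjoint_union_right.mp
          (hdisj _ (fun i hi => (Finset.mem_Ico.mp hi).1))).2
        rw [Metric.mem_ball, Real.dist_eq, sub_zero] at hd
        exact lt_of_le_of_lt (le_abs_self _) hd
      have hpow : |σ j - σ n| ^ m < ε' ^ m :=
        lt_of_le_of_lt (le_trans (pow_le_pow_left₀ (abs_nonneg _) habs m)
          (le_trans hjensen hterm)) hbsum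
      have hlt : |σ j - σ n| < ε' := by
        by_contra hge
        push_neg at hge
        exact absurd (pow_le_pow_left₀ hε'.le hge m) (not_le.mpr hpow)
      have h' := abs_lt.mp hlt
      rw [hε'def] at *
      linarith [h'.1]
    -- step 2 : lower bound for a-sum
    have step2 : ε' ^ m / 2 < ∑ j ∈ Finset.Icc n (2 * n), a j := by
      have hlb : ∀ j ∈ Finset.Icc n (2 * n), ε' ^ m / (2 * n + 1 : ℝ) ≤ a j := by
        intro j hj
        have hσj := step1 j hj
        rw [Finset.mem_Icc] at hj
        have hj2n : ((j : ℝ)) ≤ 2 * (n : ℝ) := by exact_mod_cast hj.2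
        have hj2 : ((j : ℝ) + 1) ≤ (2 * (n : ℝ) + 1) := by linarith
        have hpow : ε' ^ m ≤ σ j ^ m := pow_le_pow_left₀ hε'.le hσj.le m
        have hja : a j = σ j ^ m / ((j : ℝ) + 1) := rfl
        rw [hja]
        exact div_le_div₀ (pow_nonneg (hσnn j) m) hpow (by positivity) hj2
      have hcard : (Finset.Icc n (2 * n)).card = n + 1 := by
        rw [Nat.card_Icc]; omega
      have := Finset.card_nsmul_le_sum (Finset.Icc n (2 * n)) a _ hlb
      rw [hcard, nsmul_eq_mul] at this
      have h2n : (0:ℝ) < 2 * n + 1 := by positivity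
      have hfrac : ε' ^ m / 2 < ((n : ℝ) + 1) * (ε' ^ m / (2 * n + 1)) := by
        have key : ((n:ℝ) + 1) * (ε' ^ m / (2 * n + 1)) = ε' ^ m * (((n:ℝ) + 1) / (2 * n + 1)) := by
          ring
        rw [key]
        have hfr : (1:ℝ)/2 < ((n:ℝ) + 1) / (2 * n + 1) := by
          rw [div_lt_div_iff₀ two_pos h2n]; linarith
        calc ε' ^ m / 2 = ε' ^ m * (1/2) := by ring
          _ < _ := mul_lt_mul_of_pos_left hfr hε'm
      calc ε' ^ m / 2 < ((n : ℝ) + 1) * (ε' ^ m / (2 * n + 1)) := hfrac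
        _ = ((n + 1 : ℕ) : ℝ) * (ε' ^ m / (2 * (n:ℝ) + 1)) := by push_cast; ring
        _ ≤ ∑ j ∈ Finset.Icc n (2 * n), a j := this
    -- step 3 : upper bound
    have step3 : ∑ j ∈ Finset.Icc n (2 * n), a j < ε' ^ m / 2 := by
      have hd := hs1 (Finset.Icc n (2 * n)) (Finset.disjoint_union_right.mp
        (hdisj _ (fun i hi => (Finset.mem_Icc.mp hi).1))).1
      rw [Metric.mem_ball, Real.dist_eq, sub_zero] at hd
      exact lt_of_le_of_lt (le_abs_self _) hd
    linarith
  rw [Real.dist_eq, sub_zero, abs_of_nonneg (hσnn n)]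
  calc σ n < ε := hmain
end

section
/- Let (ρ_k) be nonnegative reals, m ≥ 2, ε > 0, and suppose Σ_{l=k₀}^∞ |ρ_{l+1} − ρ_l|^m · l^{m−1} < (ε/2)^m for some k₀. Then for any j with k_j ≥ k₀ and ρ_{k_j} > ε, one has ρ_k > ε/2 for all k with k_j ≤ k ≤ 2k_j, and consequently Σ_{k=k_j}^{2k_j} ρ_k^m / k ≥ (1/2)(ε/2)^m. -/
/-!
By the triangle inequality and the power-mean inequality, for `k_j ≤ k ≤ 2 k_j`,
`|ρ_k - ρ_{k_j}|^m ≤ (k - k_j)^{m-1} Σ_{l=k_j}^{k-1} |ρ_{l+1} - ρ_l|^m ≤ Σ_{l ≥ k₀} |ρ_{l+1} - ρ_l|^m l^{m-1}`,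
since `k - k_j ≤ k_j ≤ l`. Hence `ρ` moves by less than `ε/2` on `[k_j, 2k_j]`, and the `k_j + 1`
terms `ρ_k^m / k ≥ (ε/2)^m / (2 k_j)` add up to at least `(ε/2)^m / 2`.
-/

open Finset

lemma pow_sum_Ico_le_sum_pow_mul_pow {a : ℕ → ℝ} (ha : ∀ l, 0 ≤ a l) {n k : ℕ}
    (hk : k ≤ 2 * n) (m : ℕ) :
    (∑ l ∈ Ico n k, a l) ^ (m + 1) ≤ ∑ l ∈ Ico n k, a l ^ (m + 1) * (l : ℝ) ^ m := by
  calc (∑ l ∈ Ico n k, a l) ^ (m + 1)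
      ≤ (#(Ico n k) : ℝ) ^ m * ∑ l ∈ Ico n k, a l ^ (m + 1) :=
        pow_sum_le_card_mul_sum_pow (fun l _ => ha l) m
    _ = ∑ l ∈ Ico n k, (#(Ico n k) : ℝ) ^ m * a l ^ (m + 1) := mul_sum _ _ _
    _ ≤ ∑ l ∈ Ico n k, a l ^ (m + 1) * (l : ℝ) ^ m := by
        refine sum_le_sum fun l hl => ?_
        have hcard : #(Ico n k) ≤ l := by
          rw [Nat.card_Ico]
          have := (mem_Ico.1 hl).1
          omega
        rw [mul_comm]
        gcongr
        exact pow_nonneg (ha l) _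

lemma abs_sub_lt_of_sum_pow_mul_pow_lt {ρ : ℕ → ℝ} {m n k : ℕ} {δ : ℝ} (hδ : 0 ≤ δ)
    (hnk : n ≤ k) (hk : k ≤ 2 * n)
    (h : ∑ l ∈ Ico n k, |ρ (l + 1) - ρ l| ^ (m + 1) * (l : ℝ) ^ m < δ ^ (m + 1)) :
    |ρ k - ρ n| < δ := by
  have htriangle : |ρ k - ρ n| ≤ ∑ l ∈ Ico n k, |ρ (l + 1) - ρ l| := by
    simpa only [Real.dist_eq, abs_sub_comm] using dist_le_Ico_sum_dist ρ hnk
  refine lt_of_pow_lt_pow_left₀ (m + 1) hδ ?_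
  calc |ρ k - ρ n| ^ (m + 1) ≤ (∑ l ∈ Ico n k, |ρ (l + 1) - ρ l|) ^ (m + 1) := by gcongr
    _ ≤ ∑ l ∈ Ico n k, |ρ (l + 1) - ρ l| ^ (m + 1) * (l : ℝ) ^ m :=
        pow_sum_Ico_le_sum_pow_mul_pow (fun _ => abs_nonneg _) hk m
    _ < δ ^ (m + 1) := h

lemma half_mul_pow_le_sum_Icc_pow_div {ρ : ℕ → ℝ} {c : ℝ} (hc : 0 ≤ c) {n : ℕ} (hn : 1 ≤ n)
    (h : ∀ k ∈ Icc n (2 * n), c ≤ ρ k) (m : ℕ) :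
    1 / 2 * c ^ m ≤ ∑ k ∈ Icc n (2 * n), ρ k ^ m / k := by
  have hn' : (1 : ℝ) ≤ n := by exact_mod_cast hn
  have hterm : ∀ k ∈ Icc n (2 * n), c ^ m / (2 * n : ℝ) ≤ ρ k ^ m / k := by
    intro k hk
    obtain ⟨hnk, hk2n⟩ := mem_Icc.1 hk
    have hk0 : (0 : ℝ) < k := by exact_mod_cast (hn.trans hnk)
    have hk2n' : (k : ℝ) ≤ 2 * n := by exact_mod_cast hk2n
    have hck := h k hk
    gcongr
    exact pow_nonneg (hc.trans hck) m
  calc 1 / 2 * c ^ m = n * (c ^ m / (2 * n)) := by field_simp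
    _ ≤ (#(Icc n (2 * n)) : ℝ) * (c ^ m / (2 * n)) := by
        gcongr
        rw [Nat.card_Icc]
        exact_mod_cast (by omega : n ≤ 2 * n + 1 - n)
    _ ≤ ∑ k ∈ Icc n (2 * n), ρ k ^ m / k := by
        rw [← nsmul_eq_mul]
        exact card_nsmul_le_sum _ _ _ hterm

theorem stmt10_general (ρ : ℕ → ℝ) (m : ℕ) (hm : 2 ≤ m)
    (ε : ℝ) (hε : 0 < ε) (k₀ : ℕ) (hk₀ : 1 ≤ k₀)
    (f : ℕ → ℝ)
    (hf : ∀ l, f l = if k₀ ≤ l then |ρ (l + 1) - ρ l| ^ m * (l : ℝ) ^ (m - 1) else 0)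
    (hsum : Summable f) (hlt : ∑' l, f l < (ε / 2) ^ m)
    (kj : ℕ) (hkj : k₀ ≤ kj) (hρj : ε < ρ kj) :
    (∀ k, kj ≤ k → k ≤ 2 * kj → ε / 2 < ρ k) ∧
    (1 / 2) * (ε / 2) ^ m ≤ ∑ k ∈ Finset.Icc kj (2 * kj), ρ k ^ m / k := by
  have hf_nonneg : ∀ l, 0 ≤ f l := fun l => by rw [hf]; split_ifs <;> positivity
  have hclose : ∀ k, kj ≤ k → k ≤ 2 * kj → ε / 2 < ρ k := by
    intro k hk1 hk2
    have hpartial : ∑ l ∈ Ico kj k, |ρ (l + 1) - ρ l| ^ (m - 1 + 1) * (l : ℝ) ^ (m - 1)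
        < (ε / 2) ^ (m - 1 + 1) := by
      rw [Nat.sub_add_cancel (by omega : 1 ≤ m)]
      calc _ = ∑ l ∈ Ico kj k, f l :=
            sum_congr rfl fun l hl => by rw [hf, if_pos (hkj.trans (mem_Ico.1 hl).1)]
        _ ≤ ∑' l, f l := hsum.sum_le_tsum _ fun l _ => hf_nonneg l
        _ < _ := hlt
    have := abs_sub_lt_iff.1 (abs_sub_lt_of_sum_pow_mul_pow_lt (by positivity) hk1 hk2 hpartial)
    linarith
  exact ⟨hclose, half_mul_pow_le_sum_Icc_pow_div (by positivity) (hk₀.trans hkj)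
    (fun k hk => (hclose k (mem_Icc.1 hk).1 (mem_Icc.1 hk).2).le) m⟩

theorem stmt10 (ρ : ℕ → ℝ) (hρ : ∀ k, 0 ≤ ρ k) (m : ℕ) (hm : 2 ≤ m)
    (ε : ℝ) (hε : 0 < ε) (k₀ : ℕ) (hk₀ : 1 ≤ k₀)
    (f : ℕ → ℝ)
    (hf : ∀ l, f l = if k₀ ≤ l then |ρ (l + 1) - ρ l| ^ m * (l : ℝ) ^ (m - 1) else 0)
    (hsum : Summable f) (hlt : ∑' l, f l < (ε / 2) ^ m)
    (kj : ℕ) (hkj : k₀ ≤ kj) (hρj : ε < ρ kj) :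
    (∀ k, kj ≤ k → k ≤ 2 * kj → ε / 2 < ρ k) ∧
    (1 / 2) * (ε / 2) ^ m ≤ ∑ k ∈ Finset.Icc kj (2 * kj), ρ k ^ m / k :=
  stmt10_general ρ m hm ε hε k₀ hk₀ f hf hsum hlt kj hkj hρj
end

section
/- Let β : ℕ → ℝ_{>0} with β₀ = 1, and let M_z be the (bounded) weighted shift M_z e_k = (β_{k+1}/β_k) e_{k+1} on ℓ²(ℕ) with weights w_k = β_{k+1}/β_k, and set γ_k = β_k². Then M_z is a q-isometry (i.e. Σ_{s=0}^q (−1)^s C(q,s) (M_z*)^s M_z^s = 0) if and only if there is a polynomial S of degree at most q−1 with γ_k = S(k) for all k ∈ ℕ. -/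
/-!
The vectors `M ^ s (e k) = (β (k + s) / β k) • e (k + s)` are pairwise orthogonal, so
`∑ s, (-1) ^ s * q.choose s • (M†) ^ s * M ^ s` is diagonal in the basis `e`, with `k`-th entry
`(-1) ^ q * Δ^q γ k / γ k` for `γ = β ^ 2`. It therefore vanishes iff `Δ^q γ = 0`, and by
Newton's forward-difference formula this holds iff `γ` agrees on `ℕ` with a polynomial of degree
`< q`.
-/

open Finset Polynomial
open scoped fwdDiff

lemma fwdDiff_iter_comp_natCast {R G : Type*} [Semiring R] [AddCommGroup G] (f : R → G)
    (n k : ℕ) : Δ_[1] ^[n] (fun m : ℕ ↦ f m) k = Δ_[1] ^[n] f (k : R) := by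
  simp [fwdDiff_iter_eq_sum_shift]

lemma sum_range_succ_neg_one_pow_mul_choose_mul {R : Type*} [CommRing R] (f : ℕ → R) (n k : ℕ) :
    ∑ s ∈ range (n + 1), (-1) ^ s * (n.choose s : R) * f (k + s) = (-1) ^ n * Δ_[1] ^[n] f k := by
  rw [fwdDiff_iter_eq_sum_shift, mul_sum]
  refine sum_congr rfl fun s hs ↦ ?_
  obtain ⟨t, rfl⟩ := Nat.exists_eq_add_of_le (mem_range_succ_iff.mp hs)
  have hsign : ((-1) ^ (s + t) * (-1) ^ t : R) = (-1) ^ s := by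
    rw [pow_add, mul_assoc, ← pow_add, ← two_mul, pow_mul, neg_one_sq, one_pow, mul_one]
  simp only [Nat.add_sub_cancel_left, nsmul_eq_mul, mul_one, zsmul_eq_mul]
  push_cast
  rw [← hsign]
  ring

lemma eq_sum_choose_smul_fwdDiff_iter_of_fwdDiff_iter_eq_zero {G : Type*} [AddCommGroup G]
    {f : ℕ → G} {n : ℕ} (hf : Δ_[1] ^[n] f = 0) (k : ℕ) :
    f k = ∑ j ∈ range n, k.choose j • Δ_[1] ^[j] f 0 := by
  have hvanish : ∀ j ≥ n, Δ_[1] ^[j] f = 0 := fun j hj ↦ by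
    rw [← Nat.sub_add_cancel hj, Function.iterate_add_apply, hf]
    exact Function.iterate_fixed (by ext; simp [fwdDiff]) _
  have hnewton := shift_eq_sum_fwdDiff_iter 1 f k 0
  rw [zero_add, smul_eq_mul, mul_one] at hnewton
  rw [hnewton, ← eventually_constant_sum (n := n + k + 1) _ (by omega),
    eventually_constant_sum (N := n) _ (by omega)]
  · intro j hj
    rw [hvanish j hj, Pi.zero_apply, smul_zero]
  · intro j hj
    rw [Nat.choose_eq_zero_of_lt (by omega), zero_smul]

theorem fwdDiff_iter_succ_eq_zero_iff {K : Type*} [Field K] [CharZero K] (f : ℕ → K) (n : ℕ) :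
    Δ_[1] ^[n + 1] f = 0 ↔ ∃ P : K[X], P.natDegree ≤ n ∧ ∀ k : ℕ, f k = P.eval (k : K) := by
  constructor
  · intro hf
    -- Newton's interpolation polynomial `∑ j, Δ^j f 0 * (X choose j)`
    refine ⟨∑ j ∈ range (n + 1), (Δ_[1] ^[j] f 0 / j.factorial) • descPochhammer K j, ?_,
      fun k ↦ ?_⟩
    · refine natDegree_sum_le_of_forall_le _ _ fun j hj ↦ ?_
      exact (natDegree_smul_le _ _).trans
        ((descPochhammer_natDegree K j).trans_le (mem_range_succ_iff.mp hj))
    · rw [eq_sum_choose_smul_fwdDiff_iter_of_fwdDiff_iter_eq_zero hf k, eval_finsetSum]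
      refine sum_congr rfl fun j _ ↦ ?_
      rw [eval_smul, nsmul_eq_mul, Nat.cast_choose_eq_descPochhammer_div, smul_eq_mul]
      ring
  · rintro ⟨P, hPn, hP⟩
    ext k
    rw [show f = fun m : ℕ ↦ P.eval (m : K) from funext hP]
    exact (fwdDiff_iter_comp_natCast P.eval _ k).trans
      (congrFun (fwdDiff_iter_eq_zero_of_degree_lt (Nat.lt_succ_of_le hPn)) k)

lemma Orthonormal.eq_of_forall_inner_eq {𝕜 E ι : Type*} [RCLike 𝕜] [NormedAddCommGroup E]
    [InnerProductSpace 𝕜 E] [CompleteSpace E] {e : ι → E} (he : Orthonormal 𝕜 e)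
    (hdense : ⊤ ≤ (Submodule.span 𝕜 (Set.range e)).topologicalClosure) {x y : E}
    (h : ∀ i, inner 𝕜 (e i) x = inner 𝕜 (e i) y) : x = y := by
  let b := HilbertBasis.mk he hdense
  refine b.repr.injective (lp.ext (funext fun i ↦ ?_))
  simpa [b, HilbertBasis.repr_apply_apply, HilbertBasis.coe_mk] using h i

lemma ContinuousLinearMap.eq_zero_iff_of_apply_eq_smul {H ι : Type*} [NormedAddCommGroup H]
    [InnerProductSpace ℂ H] {e : ι → H} (he : ∀ i, e i ≠ 0)
    (hdense : ⊤ ≤ (Submodule.span ℂ (Set.range e)).topologicalClosure) {T : H →L[ℂ] H}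
    {c : ι → ℝ} (hT : ∀ i, T (e i) = c i • e i) : T = 0 ↔ c = 0 := by
  constructor
  · rintro rfl
    ext i
    simpa [he i, eq_comm] using hT i
  · rintro rfl
    refine ContinuousLinearMap.ext_on
      (Submodule.dense_iff_topologicalClosure_eq_top.2 (top_unique hdense)) ?_
    rintro _ ⟨i, rfl⟩
    simp [hT]

noncomputable def qIsometryDefect {H : Type*} [NormedAddCommGroup H] [InnerProductSpace ℂ H]
    [CompleteSpace H] (q : ℕ) (T : H →L[ℂ] H) : H →L[ℂ] H :=
  ∑ s ∈ range (q + 1), ((-1 : ℝ) ^ s * (q.choose s : ℝ)) •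
    (ContinuousLinearMap.adjoint T ^ s * T ^ s)

section WeightedShift

variable {H : Type*} [NormedAddCommGroup H] [InnerProductSpace ℂ H] {e : ℕ → H} {β : ℕ → ℝ}
  {M : H →L[ℂ] H}

lemma pow_apply_of_weightedShift (hβ : ∀ k, β k ≠ 0)
    (hM : ∀ k, M (e k) = ((β (k + 1) / β k : ℝ) : ℂ) • e (k + 1)) (s k : ℕ) :
    (M ^ s) (e k) = ((β (k + s) / β k : ℝ) : ℂ) • e (k + s) := by
  induction s generalizing k with
  | zero => simp [hβ k]
  | succ s ih =>
    rw [pow_succ, mul_apply_eq_comp, hM, map_smul, ih, smul_smul,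
      ← Complex.ofReal_mul, mul_comm, div_mul_div_cancel₀ (hβ (k + 1)), add_right_comm, add_assoc]

lemma adjoint_pow_mul_pow_apply_of_weightedShift [CompleteSpace H] (he : Orthonormal ℂ e)
    (hdense : ⊤ ≤ (Submodule.span ℂ (Set.range e)).topologicalClosure) (hβ : ∀ k, β k ≠ 0)
    (hM : ∀ k, M (e k) = ((β (k + 1) / β k : ℝ) : ℂ) • e (k + 1)) (s k : ℕ) :
    (ContinuousLinearMap.adjoint M ^ s * M ^ s) (e k) = (β (k + s) / β k) ^ 2 • e k := by
  refine he.eq_of_forall_inner_eq hdense fun i ↦ ?_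
  rw [← ContinuousLinearMap.star_eq_adjoint, ← star_pow, ContinuousLinearMap.star_eq_adjoint,
    mul_apply_eq_comp, ContinuousLinearMap.adjoint_inner_right,
    pow_apply_of_weightedShift hβ hM, pow_apply_of_weightedShift hβ hM,
    inner_smul_left, inner_smul_right, ← Complex.coe_smul, inner_smul_right,
    orthonormal_iff_ite.mp he, orthonormal_iff_ite.mp he, Complex.conj_ofReal]
  obtain rfl | hik := eq_or_ne i k
  · simp [sq]
  · simp [hik]

lemma qIsometryDefect_apply_of_weightedShift [CompleteSpace H] (he : Orthonormal ℂ e)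
    (hdense : ⊤ ≤ (Submodule.span ℂ (Set.range e)).topologicalClosure) (hβ : ∀ k, β k ≠ 0)
    (hM : ∀ k, M (e k) = ((β (k + 1) / β k : ℝ) : ℂ) • e (k + 1)) (q k : ℕ) :
    qIsometryDefect q M (e k) = ((-1) ^ q * Δ_[1] ^[q] (fun n ↦ β n ^ 2) k / β k ^ 2) • e k := by
  simp only [qIsometryDefect, _root_.sum_apply, smul_apply,
    adjoint_pow_mul_pow_apply_of_weightedShift he hdense hβ hM, smul_smul, ← sum_smul]
  rw [← sum_range_succ_neg_one_pow_mul_choose_mul, sum_div]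
  congr 1
  refine sum_congr rfl fun s _ ↦ ?_
  rw [div_pow, mul_div_assoc]

end WeightedShift

theorem stmt11_general {H : Type*} [NormedAddCommGroup H] [InnerProductSpace ℂ H] [CompleteSpace H]
    (e : ℕ → H) (he : Orthonormal ℂ e)
    (hdense : ⊤ ≤ (Submodule.span ℂ (Set.range e)).topologicalClosure)
    (β : ℕ → ℝ) (hβ : ∀ k, 0 < β k)
    (M : H →L[ℂ] H)
    (hM : ∀ k, M (e k) = ((β (k + 1) / β k : ℝ) : ℂ) • e (k + 1))
    (q : ℕ) (hq : 1 ≤ q) :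
    (∑ s ∈ Finset.range (q + 1), ((-1 : ℝ) ^ s * (q.choose s : ℝ)) •
        ((ContinuousLinearMap.adjoint M) ^ s * M ^ s) = 0) ↔
    ∃ S : Polynomial ℝ, S.natDegree ≤ q - 1 ∧ ∀ k : ℕ, (β k) ^ 2 = S.eval (k : ℝ) := by
  have hβ' : ∀ k, β k ≠ 0 := fun k ↦ (hβ k).ne'
  obtain ⟨n, rfl⟩ := Nat.exists_eq_add_of_le' hq
  change qIsometryDefect (n + 1) M = 0 ↔ _
  rw [ContinuousLinearMap.eq_zero_iff_of_apply_eq_smul he.ne_zero hdense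
    (qIsometryDefect_apply_of_weightedShift he hdense hβ' hM (n + 1)), Nat.add_sub_cancel,
    ← fwdDiff_iter_succ_eq_zero_iff, funext_iff, funext_iff]
  simp [hβ']

theorem stmt11 {H : Type*} [NormedAddCommGroup H] [InnerProductSpace ℂ H] [CompleteSpace H]
    (e : ℕ → H) (he : Orthonormal ℂ e)
    (hdense : ⊤ ≤ (Submodule.span ℂ (Set.range e)).topologicalClosure)
    (β : ℕ → ℝ) (hβ : ∀ k, 0 < β k) (hβ0 : β 0 = 1)
    (M : H →L[ℂ] H)
    (hM : ∀ k, M (e k) = ((β (k + 1) / β k : ℝ) : ℂ) • e (k + 1))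
    (q : ℕ) (hq : 1 ≤ q) :
    (∑ s ∈ Finset.range (q + 1), ((-1 : ℝ) ^ s * (q.choose s : ℝ)) •
        ((ContinuousLinearMap.adjoint M) ^ s * M ^ s) = 0) ↔
    ∃ S : Polynomial ℝ, S.natDegree ≤ q - 1 ∧ ∀ k : ℕ, (β k) ^ 2 = S.eval (k : ℝ) :=
  stmt11_general e he hdense β hβ M hM q hq
end

section
/- Let (γ_k) be positive reals with ∇²γ_k ≤ 0 and ∇γ_k ≥ 0 for all k, and define δ_k² = γ_{k+1}/γ_k. Then for all k ≥ 2, |δ_{k+1}² − δ_k²| ≤ 2/k. -/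
theorem stmt14 (γ : ℕ → ℝ) (hpos : ∀ k, 0 < γ k)
    (hconc : ∀ k, γ (k + 2) - 2 * γ (k + 1) + γ k ≤ 0)
    (hmono : ∀ k, 0 ≤ γ (k + 1) - γ k) :
    ∀ k : ℕ, 2 ≤ k →
      |γ (k + 2) / γ (k + 1) - γ (k + 1) / γ k| ≤ 2 / k := by
  set d : ℕ → ℝ := fun k => γ (k + 1) - γ k with hd
  have hanti : Antitone d := antitone_nat_of_succ_le (fun n => by
    have := hconc n; simp only [hd]; linarith)
  have hsum2 : ∀ k : ℕ, ∑ j ∈ Finset.range k, d j = γ k - γ 0 := by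
    intro k
    induction k with
    | zero => simp
    | succ n ih => rw [Finset.sum_range_succ, ih]; simp only [hd]; ring
  have hkey : ∀ k : ℕ, (k : ℝ) * d k ≤ γ k := by
    intro k
    have h1 : (k : ℝ) * d k ≤ ∑ j ∈ Finset.range k, d j := by
      calc (k : ℝ) * d k = ∑ _j ∈ Finset.range k, d k := by
            simp [Finset.sum_const, mul_comm]
        _ ≤ ∑ j ∈ Finset.range k, d j :=
            Finset.sum_le_sum fun j hj => hanti (le_of_lt (Finset.mem_range.mp hj))
    have := hpos 0
    linarith [h1, (hsum2 k).le]
  intro k hk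
  have hkR : (2 : ℝ) ≤ (k : ℝ) := by exact_mod_cast hk
  have hk0 : (0 : ℝ) < k := by linarith
  have ha := hpos k
  have hb := hpos (k + 1)
  have hc := hpos (k + 2)
  have hm1 : 0 ≤ d k := hmono k
  have hm2 : 0 ≤ d (k + 1) := hmono (k + 1)
  have h1 : (k : ℝ) * d k ≤ γ k := hkey k
  have h2 : ((k : ℝ) + 1) * d (k + 1) ≤ γ (k + 1) := by
    have := hkey (k + 1); push_cast at this ⊢; linarith
  have hdk : d k = γ (k + 1) - γ k := rfl
  have hdk1 : d (k + 1) = γ (k + 2) - γ (k + 1) := rfl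
  have habs : γ (k + 2) / γ (k + 1) - γ (k + 1) / γ k
      = (γ (k + 2) * γ k - γ (k + 1) * γ (k + 1)) / (γ (k + 1) * γ k) := by
    field_simp
  rw [habs, abs_div, abs_of_pos (mul_pos hb ha),
    div_le_div_iff₀ (mul_pos hb ha) hk0]
  rw [hdk] at hm1 h1
  rw [hdk1] at hm2 h2
  rcases abs_cases (γ (k + 2) * γ k - γ (k + 1) * γ (k + 1)) with ⟨he, _⟩ | ⟨he, _⟩ <;>
    rw [he]
  · nlinarith [mul_nonneg (mul_nonneg hk0.le hm1) hb.le, mul_nonneg ha.le hm2,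
      mul_le_mul_of_nonneg_left h2 ha.le, mul_pos ha hb]
  · nlinarith [mul_le_mul_of_nonneg_left h1 hb.le,
      mul_nonneg (mul_nonneg hk0.le ha.le) hm2, mul_pos ha hb]
end

section
/- Define β_k² by β_{2k}² = 12^{−k} and β_{2k+1}² = 12^{−k}/3 for k ≥ 0, and set γ_k = β_k², δ_k² = γ_{k+1}/γ_k. Then ∇³γ_k < 0 for all k ∈ ℕ (indeed ∇³γ_{2k} = −(2/9)·12^{−k} and ∇³γ_{2k+1} = −(23/144)·12^{−k}), but δ_{k+1}² − δ_k² = (−1)^{k+1}/12 for all k, so δ_{k+1}² − δ_k² does not tend to 0. -/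
open Filter Topology

theorem not_tendsto_zero_of_abs_eq_const {u : ℕ → ℝ} {c : ℝ} (hc : c ≠ 0)
    (hu : ∀ k, |u k| = c) : ¬ Tendsto u atTop (𝓝 0) := fun h => by
  have habs : Tendsto (fun k => |u k|) atTop (𝓝 0) := by simpa using h.abs
  simp only [hu] at habs
  exact hc (tendsto_nhds_unique tendsto_const_nhds habs)

section

variable {γ : ℕ → ℝ}

theorem third_diff_even (hγeven : ∀ k : ℕ, γ (2 * k) = (12 : ℝ)⁻¹ ^ k)
    (hγodd : ∀ k : ℕ, γ (2 * k + 1) = (12 : ℝ)⁻¹ ^ k / 3) (k : ℕ) :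
    γ (2 * k + 3) - 3 * γ (2 * k + 2) + 3 * γ (2 * k + 1) - γ (2 * k)
      = -(2 / 9) * (12 : ℝ)⁻¹ ^ k := by
  rw [show 2 * k + 3 = 2 * (k + 1) + 1 by ring, show 2 * k + 2 = 2 * (k + 1) by ring,
    hγodd, hγeven, hγodd, hγeven]
  ring

theorem third_diff_odd (hγeven : ∀ k : ℕ, γ (2 * k) = (12 : ℝ)⁻¹ ^ k)
    (hγodd : ∀ k : ℕ, γ (2 * k + 1) = (12 : ℝ)⁻¹ ^ k / 3) (k : ℕ) :
    γ (2 * k + 4) - 3 * γ (2 * k + 3) + 3 * γ (2 * k + 2) - γ (2 * k + 1)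
      = -(23 / 144) * (12 : ℝ)⁻¹ ^ k := by
  rw [show 2 * k + 4 = 2 * (k + 2) by ring, show 2 * k + 3 = 2 * (k + 1) + 1 by ring,
    show 2 * k + 2 = 2 * (k + 1) by ring, hγeven, hγodd, hγeven, hγodd]
  ring

theorem third_diff_neg (hγeven : ∀ k : ℕ, γ (2 * k) = (12 : ℝ)⁻¹ ^ k)
    (hγodd : ∀ k : ℕ, γ (2 * k + 1) = (12 : ℝ)⁻¹ ^ k / 3) (k : ℕ) :
    γ (k + 3) - 3 * γ (k + 2) + 3 * γ (k + 1) - γ k < 0 := by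
  obtain ⟨m, rfl | rfl⟩ := Nat.even_or_odd' k
  · rw [third_diff_even hγeven hγodd]
    have : (0 : ℝ) < 12⁻¹ ^ m := by positivity
    linarith
  · rw [show 2 * m + 1 + 3 = 2 * m + 4 by ring, show 2 * m + 1 + 2 = 2 * m + 3 by ring,
      show 2 * m + 1 + 1 = 2 * m + 2 by ring, third_diff_odd hγeven hγodd]
    have : (0 : ℝ) < 12⁻¹ ^ m := by positivity
    linarith

/-- The ratio `δ_k² = γ_{k+1} / γ_k` alternates between `1/3` (even `k`) and `1/4` (odd `k`). -/
theorem ratio_succ (hγeven : ∀ k : ℕ, γ (2 * k) = (12 : ℝ)⁻¹ ^ k)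
    (hγodd : ∀ k : ℕ, γ (2 * k + 1) = (12 : ℝ)⁻¹ ^ k / 3) (k : ℕ) :
    γ (k + 1) / γ k = 7 / 24 + (-1) ^ k / 24 := by
  have hpos : ∀ m : ℕ, (12 : ℝ)⁻¹ ^ m ≠ 0 := fun m => by positivity
  obtain ⟨m, rfl | rfl⟩ := Nat.even_or_odd' k
  · rw [hγodd, hγeven, pow_mul, neg_one_sq, one_pow]
    field_simp [hpos m]
    norm_num
  · rw [show 2 * m + 1 + 1 = 2 * (m + 1) by ring, hγeven, hγodd, pow_succ, pow_succ, pow_mul,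
      neg_one_sq, one_pow]
    field_simp [hpos m]
    norm_num

end

theorem stmt17 (γ : ℕ → ℝ)
    (hγeven : ∀ k : ℕ, γ (2 * k) = (12 : ℝ)⁻¹ ^ k)
    (hγodd : ∀ k : ℕ, γ (2 * k + 1) = (12 : ℝ)⁻¹ ^ k / 3) :
    (∀ k : ℕ, γ (k + 3) - 3 * γ (k + 2) + 3 * γ (k + 1) - γ k < 0) ∧
    (∀ k : ℕ, γ (2 * k + 3) - 3 * γ (2 * k + 2) + 3 * γ (2 * k + 1) - γ (2 * k)
      = -(2 / 9) * (12 : ℝ)⁻¹ ^ k) ∧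
    (∀ k : ℕ, γ (2 * k + 4) - 3 * γ (2 * k + 3) + 3 * γ (2 * k + 2) - γ (2 * k + 1)
      = -(23 / 144) * (12 : ℝ)⁻¹ ^ k) ∧
    (∀ k : ℕ, γ (k + 2) / γ (k + 1) - γ (k + 1) / γ k = (-1 : ℝ) ^ (k + 1) / 12) ∧
    ¬ Filter.Tendsto (fun k => γ (k + 2) / γ (k + 1) - γ (k + 1) / γ k)
        Filter.atTop (nhds 0) := by
  have hδ (k : ℕ) : γ (k + 2) / γ (k + 1) - γ (k + 1) / γ k = (-1 : ℝ) ^ (k + 1) / 12 := by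
    rw [ratio_succ hγeven hγodd, ratio_succ hγeven hγodd, pow_succ]
    ring
  refine ⟨third_diff_neg hγeven hγodd, third_diff_even hγeven hγodd,
    third_diff_odd hγeven hγodd, hδ, not_tendsto_zero_of_abs_eq_const (c := 1 / 12) (by norm_num)
      fun k => ?_⟩
  simp [hδ, abs_div]
end
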